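/- (Minimal sampled-data realization of the PI+RI controller) Let u : ℝ → ℝ be continuous, k_p, k_i ∈ ℝ, p_r ∈ [0,1], and let {t_k} be a reset sequence, with resets applied at t_k for k ≥ 1. Suppose x_i : [0,∞) → ℝ is continuous with x_i(t) = x_i(0) + k_i ∫₀ᵗ u(s) ds, and x_ri : [0,∞) → ℝ satisfies x_ri(t) = x_ri(0) + k_i ∫₀ᵗ u(s) ds for t ∈ [0, t_1] and x_ri(t) = k_i ∫_{t_k}^t u(s) ds for t ∈ (t_k, t_{k+1}], k ≥ 1 (i.e. ẋ_ri = k_i u between resets and x_ri(t_k⁺) = 0 for k ≥ 1). Define x_s(t) = x_i(0) + k_i ∫₀ᵗ u(s) ds. Then the PI+RI output y_r(t) = (1 − p_r) x_i(t) + p_r x_ri(t) + k_p u(t) satisfies: y_r(t) = x_s(t) − p_r (x_i(0) − x_ri(0)) + k_p u(t) for all t ∈ [0, t_1], and y_r(t) = x_s(t) − p_r x_s(t_k) + k_p u(t) for all t ∈ (t_k, t_{k+1}], k ≥ 1. -/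

import Mathlib

open Set Filter

/-- A reset sequence: a strictly increasing sequence `{t_k}` with `t 0 = 0`,
inter-reset times in `[Tm, TM]`, and `t k → ∞`. -/
def IsResetSeq (Tm TM : ℝ) (t : ℕ → ℝ) : Prop :=
  StrictMono t ∧ t 0 = 0 ∧ (∀ k, t (k + 1) - t k ∈ Icc Tm TM) ∧ Tendsto t atTop atTop

/-! Since `t_k ≥ 0`, the states `x_i` and `x_s` agree on every time of interest. On `(t_k, t_{k+1}]`
additivity of the integral gives `x_ri(τ) = k_i ∫_{t_k}^τ u = x_s(τ) − x_s(t_k)`, so the output is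
`(1 − p_r) x_s(τ) + p_r (x_s(τ) − x_s(t_k)) + k_p u(τ)`; before the first reset the two integrator
states differ only by the constant `x_i(0) − x_ri(0)`. -/

lemma IsResetSeq.nonneg {Tm TM : ℝ} {t : ℕ → ℝ} (ht : IsResetSeq Tm TM t) (k : ℕ) : 0 ≤ t k :=
  ht.2.1 ▸ ht.1.monotone (Nat.zero_le k)

lemma add_mul_integral_sub_add_mul_integral {u : ℝ → ℝ} {a b : ℝ}
    (ha : IntervalIntegrable u MeasureTheory.volume 0 a)
    (hb : IntervalIntegrable u MeasureTheory.volume 0 b) (c k : ℝ) :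
    (c + k * ∫ s in (0:ℝ)..b, u s) - (c + k * ∫ s in (0:ℝ)..a, u s) = k * ∫ s in a..b, u s := by
  rw [← intervalIntegral.integral_interval_sub_left hb ha]
  ring

theorem piri_minimal_sampled_realization_general
    (Tm TM kp ki pr : ℝ)
    (t : ℕ → ℝ) (ht : IsResetSeq Tm TM t)
    (u : ℝ → ℝ) (hu : Continuous u)
    (xi : ℝ → ℝ) (hxi : ∀ τ : ℝ, 0 ≤ τ → xi τ = xi 0 + ki * ∫ s in (0:ℝ)..τ, u s)
    (xri : ℝ → ℝ)
    (hxri0 : ∀ τ ∈ Icc 0 (t 1), xri τ = xri 0 + ki * ∫ s in (0:ℝ)..τ, u s)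
    (hxrik : ∀ k : ℕ, 1 ≤ k → ∀ τ ∈ Ioc (t k) (t (k + 1)),
      xri τ = ki * ∫ s in (t k)..τ, u s)
    (xs : ℝ → ℝ) (hxs : ∀ τ : ℝ, xs τ = xi 0 + ki * ∫ s in (0:ℝ)..τ, u s) :
    (∀ τ ∈ Icc 0 (t 1),
      (1 - pr) * xi τ + pr * xri τ + kp * u τ
        = xs τ - pr * (xi 0 - xri 0) + kp * u τ) ∧
    (∀ k : ℕ, 1 ≤ k → ∀ τ ∈ Ioc (t k) (t (k + 1)),
      (1 - pr) * xi τ + pr * xri τ + kp * u τ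
        = xs τ - pr * xs (t k) + kp * u τ) := by
  have hxi_eq_xs : ∀ τ, 0 ≤ τ → xi τ = xs τ := fun τ hτ => (hxi τ hτ).trans (hxs τ).symm
  refine ⟨fun τ hτ => ?_, fun k hk τ hτ => ?_⟩
  · rw [hxi τ hτ.1, hxri0 τ hτ, hxs τ]
    ring
  · have hxri_eq : xri τ = xs τ - xs (t k) := by
      rw [hxrik k hk τ hτ, hxs, hxs,
        add_mul_integral_sub_add_mul_integral (hu.intervalIntegrable _ _)
        (hu.intervalIntegrable _ _)]
    rw [hxi_eq_xs τ ((ht.nonneg k).trans hτ.1.le), hxri_eq]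
    ring

/-- Minimal sampled-data realization of the PI+RI controller: with
`x_i(t) = x_i(0) + k_i ∫₀ᵗ u`, `x_ri` the reset integrator state (reset at `t_k`, `k ≥ 1`），
and `x_s(t) = x_i(0) + k_i ∫₀ᵗ u`, the PI+RI output
`y_r = (1−p_r)x_i + p_r x_ri + k_p u` satisfies
`y_r(t) = x_s(t) − p_r (x_i(0) − x_ri(0)) + k_p u(t)` on `[0, t_1]` and
`y_r(t) = x_s(t) − p_r x_s(t_k) + k_p u(t)` on `(t_k, t_{k+1}]`, `k ≥ 1`. -/
theorem piri_minimal_sampled_realization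
    (Tm TM kp ki pr : ℝ) (hTm : 0 ≤ Tm) (hTM : Tm ≤ TM) (hpr : pr ∈ Icc (0:ℝ) 1)
    (t : ℕ → ℝ) (ht : IsResetSeq Tm TM t)
    (u : ℝ → ℝ) (hu : Continuous u)
    (xi : ℝ → ℝ) (hxi : ∀ τ : ℝ, 0 ≤ τ → xi τ = xi 0 + ki * ∫ s in (0:ℝ)..τ, u s)
    (xri : ℝ → ℝ)
    (hxri0 : ∀ τ ∈ Icc 0 (t 1), xri τ = xri 0 + ki * ∫ s in (0:ℝ)..τ, u s)
    (hxrik : ∀ k : ℕ, 1 ≤ k → ∀ τ ∈ Ioc (t k) (t (k + 1)),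
      xri τ = ki * ∫ s in (t k)..τ, u s)
    (xs : ℝ → ℝ) (hxs : ∀ τ : ℝ, xs τ = xi 0 + ki * ∫ s in (0:ℝ)..τ, u s) :
    (∀ τ ∈ Icc 0 (t 1),
      (1 - pr) * xi τ + pr * xri τ + kp * u τ
        = xs τ - pr * (xi 0 - xri 0) + kp * u τ) ∧
    (∀ k : ℕ, 1 ≤ k → ∀ τ ∈ Ioc (t k) (t (k + 1)),
      (1 - pr) * xi τ + pr * xri τ + kp * u τ
        = xs τ - pr * xs (t k) + kp * u τ) :=
  piri_minimal_sampled_realization_general Tm TM kp ki pr t ht u hu xi hxi xri hxri0 hxrik xs hxs
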